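/- Suppose Condition 2.1 holds with P-almost sure convergence in place of convergence in probability (i.e. G_n(θ̄) → 0 P-a.s. and sup_{θ∈M} ‖∂_θ G_n(θ) − ∂_θ G(θ)‖ → 0 P-a.s.). Then there exists a sequence (θ̂_n) of G_n-estimators which is strongly θ̄-consistent, i.e. θ̂_n → θ̄ P-almost surely as n → ∞. -/

import Mathlib

open MeasureTheory ProbabilityTheory Filter Topology Metric
open scoped RealInnerProductSpace

noncomputable section

/-- `ℝ^p` with the Euclidean norm. -/
abbrev Eucl (p : ℕ) := EuclideanSpace ℝ (Fin p)

/-- A measurable-space structure on `Θ_δ = Θ ∪ {δ}`, modelled as `Option`;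
`none` plays the role of the special point `δ` lying outside the parameter set. -/
instance {α : Type u} [MeasurableSpace α] : MeasurableSpace (Option α) :=
  MeasurableSpace.comap (Equiv.optionEquivSumPUnit.{u, u} α) inferInstance

/-- The domain of definition `Dₙ` of `Gₙ`-estimators: the set of `ω` for which the
estimating equation `Gₙ(θ, ω) = 0` has at least one solution `θ ∈ Θ`. -/
def Dset {Ω : Type*} {p : ℕ} (Θ : Set (Eucl p)) (G : Eucl p → Ω → Eucl p) : Set Ω :=
  {ω | ∃ θ ∈ Θ, G θ ω = 0}

/-- A `Gₙ`-estimator: an `𝓕ₙ`-measurable map into `Θ_δ` which solves the estimating equation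
on `Dₙ` and equals `δ` (i.e. `none`) on the complement of `Dₙ`. -/
def IsEstimator {Ω : Type*} {p : ℕ} (𝓕n : MeasurableSpace Ω) (Θ : Set (Eucl p))
    (G : Eucl p → Ω → Eucl p) (est : Ω → Option (Eucl p)) : Prop :=
  Measurable[𝓕n] est ∧
    ∀ ω, (ω ∈ Dset Θ G → ∃ θ, est ω = some θ ∧ θ ∈ Θ ∧ G θ ω = 0) ∧
      (ω ∉ Dset Θ G → est ω = none)

/-- The distance from a point of `Θ_δ` to a parameter `θ`, with the convention that the
distance from the special point `δ` to any point of `Θ` equals `1`. -/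
def distδ {p : ℕ} (x : Option (Eucl p)) (θ : Eucl p) : ℝ :=
  Option.elim x 1 fun θ' => dist θ' θ

/-- Weak `θ̄`-consistency: convergence in `P`-probability of the estimator sequence to `θ̄`. -/
def WeaklyConsistent {Ω : Type*} [MeasurableSpace Ω] {p : ℕ} (P : Measure Ω)
    (est : ℕ → Ω → Option (Eucl p)) (θbar : Eucl p) : Prop :=
  ∀ ε > (0 : ℝ), Tendsto (fun n => P {ω | ε ≤ distδ (est n ω) θbar}) atTop (𝓝 0)

/-- Condition 2.1 with `P`-almost sure convergence in place of convergence in probability: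
`Gₙ(θ̄) → 0` a.s. and `sup_{θ∈M} ‖∂_θGₙ(θ) - ∂_θG(θ)‖ → 0` a.s. -/
def Cond21AS {Ω : Type*} [MeasurableSpace Ω] {p : ℕ} (P : Measure Ω) (Θ : Set (Eucl p))
    (G : ℕ → Eucl p → Ω → Eucl p) (θbar : Eucl p) (M : Set (Eucl p))
    (Glim : Eucl p → Ω → Eucl p) : Prop :=
  θbar ∈ interior Θ ∧ IsOpen M ∧ θbar ∈ M ∧ M ⊆ Θ ∧
  (∀ᵐ ω ∂P, Tendsto (fun n => G n θbar ω) atTop (𝓝 0)) ∧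
  (∀ᵐ ω ∂P, Glim θbar ω = 0) ∧
  (∀ᵐ ω ∂P, (∀ n, ContDiffOn ℝ 1 (fun θ => G n θ ω) M) ∧
    ContDiffOn ℝ 1 (fun θ => Glim θ ω) M) ∧
  (∀ᵐ ω ∂P, TendstoUniformlyOn (fun n θ => fderiv ℝ (fun θ' => G n θ' ω) θ)
    (fun θ => fderiv ℝ (fun θ' => Glim θ' ω) θ) atTop M) ∧
  (∀ᵐ ω ∂P, IsUnit (fderiv ℝ (fun θ => Glim θ ω) θbar))

open Set
open scoped ENNReal NNReal

universe u

namespace Thm22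

lemma measurableSet_some_preimage {α : Type u} [MeasurableSpace α] {E : Set (Option α)}
    (hE : MeasurableSet E) : MeasurableSet (some ⁻¹' E) := by
  rw [MeasurableSpace.measurableSet_comap] at hE
  obtain ⟨S, hS, rfl⟩ := hE
  have : (some : α → Option α) ⁻¹' ((Equiv.optionEquivSumPUnit.{u,u} α) ⁻¹' S) =
      Sum.inl ⁻¹' S := by
    ext a; simp
  rw [this]
  exact measurable_inl hS


variable {α : Type*} [TopologicalSpace α] [PolishSpace α] [MeasurableSpace α] [BorelSpace α]

/-- The set of sequences bounded by `σ` on coordinates `< k`. -/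
def Eset (σ : ℕ → ℕ) (k : ℕ) : Set (ℕ → ℕ) := {β | ∀ i < k, β i ≤ σ i}

lemma Eset_congr {σ σ' : ℕ → ℕ} {k : ℕ} (h : ∀ i < k, σ i = σ' i) : Eset σ k = Eset σ' k := by
  ext β; exact ⟨fun hb i hi => (h i hi) ▸ hb i hi, fun hb i hi => (h i hi).symm ▸ hb i hi⟩

lemma Eset_antitone (σ : ℕ → ℕ) : Antitone (Eset σ) := fun k l hkl β hb i hi => hb i (lt_of_lt_of_le hi hkl)

lemma Eset_succ (σ : ℕ → ℕ) (k : ℕ) : Eset σ (k + 1) = Eset σ k ∩ {β | β k ≤ σ k} := by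
  ext β
  constructor
  · exact fun h => ⟨fun i hi => h i (hi.trans (Nat.lt_succ_self k)), h k (Nat.lt_succ_self k)⟩
  · rintro ⟨h1, h2⟩ i hi
    rcases Nat.lt_succ_iff_lt_or_eq.mp hi with hi | rfl
    · exact h1 i hi
    · exact h2

/-- Key inner approximation: for a continuous map from Baire space and finite measure,
the (outer) measure of the range is approximated from inside by compact subsets. -/
theorem exists_isCompact_subset_range (f : (ℕ → ℕ) → α) (hf : Continuous f)
    (ν : Measure α) [IsFiniteMeasure ν] {ε : ℝ≥0∞} (hε : ε ≠ 0) :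
    ∃ K : Set α, IsCompact K ∧ K ⊆ range f ∧ ν (range f) ≤ ν K + ε := by
  classical
  set t := ν (range f) with ht
  have htfin : t ≠ ⊤ := (measure_lt_top ν _).ne
  -- invariant
  set P : (ℕ → ℕ) → ℕ → Prop := fun σ k => t < ν (f '' Eset σ k) + ε with hP
  have base : P (fun _ => 0) 0 := by
    have : Eset (fun _ => 0) 0 = univ := by ext β; simp [Eset]
    simp only [hP, this, image_univ]
    exact ENNReal.lt_add_right htfin hε
  have step : ∀ (σ : ℕ → ℕ) (k : ℕ), P σ k → ∃ m, P (Function.update σ k m) (k + 1) := by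
    intro σ k hPk
    by_contra hcon
    push_neg at hcon
    have hEk : ∀ m, Eset (Function.update σ k m) (k + 1) = Eset σ k ∩ {β | β k ≤ m} := by
      intro m
      rw [Eset_succ]
      congr 1
      · exact Eset_congr (fun i hi => (Function.update_of_ne hi.ne _ _))
      · simp
    have hdir : Directed (fun x1 x2 => x1 ⊆ x2) (fun m => f '' (Eset σ k ∩ {β | β k ≤ m})) := by
      intro m m'
      exact ⟨max m m', image_mono (inter_subset_inter_right _ (fun β hb => show β k ≤ max m m' from le_trans hb (le_max_left _ _))),
        image_mono (inter_subset_inter_right _ (fun β hb => show β k ≤ max m m' from le_trans hb (le_max_right _ _)))⟩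
    have hun : (⋃ m, f '' (Eset σ k ∩ {β | β k ≤ m})) = f '' Eset σ k := by
      have hun0 : (⋃ m, (Eset σ k ∩ {β | β k ≤ m})) = Eset σ k :=
        Subset.antisymm (iUnion_subset fun m => inter_subset_left)
          (fun β hb => mem_iUnion.mpr ⟨β k, hb, show β k ≤ β k from le_rfl⟩)
      rw [← image_iUnion, hun0]
    have hsup := hdir.measure_iUnion (μ := ν)
    rw [hun] at hsup
    have hle : ∀ m, ν (f '' (Eset σ k ∩ {β | β k ≤ m})) + ε ≤ t := by
      intro m
      have h := hcon m
      simp only [hP, not_lt] at h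
      rwa [hEk m] at h
    have hall : ν (f '' Eset σ k) + ε ≤ t := by
      rw [hsup, ENNReal.iSup_add]
      exact iSup_le hle
    simp only [hP] at hPk
    exact absurd (lt_of_lt_of_le hPk hall) (lt_irrefl _)
  -- build the sequence
  let appr : (k : ℕ) → {σ : ℕ → ℕ // P σ k} := fun k =>
    Nat.rec ⟨fun _ => 0, base⟩ (fun k ih => ⟨Function.update ih.1 k (step ih.1 k ih.2).choose,
      (step ih.1 k ih.2).choose_spec⟩) k
  have happr_succ : ∀ k, ∀ i < k, (appr (k+1)).1 i = (appr k).1 i := by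
    intro k i hi
    exact Function.update_of_ne hi.ne _ _
  set σfin : ℕ → ℕ := fun i => (appr (i + 1)).1 i with hσfin
  have hagree : ∀ k, ∀ i < k, (appr k).1 i = σfin i := by
    intro k
    induction k with
    | zero => intro i hi; exact absurd hi (Nat.not_lt_zero i)
    | succ k ih =>
      intro i hi
      rcases Nat.lt_succ_iff_lt_or_eq.mp hi with hi' | rfl
      · rw [happr_succ k i hi', ih i hi']
      · rfl
  have hPfin : ∀ k, P σfin k := by
    intro k
    have h := (appr k).2
    simp only [hP] at h ⊢
    rwa [Eset_congr (σ' := σfin) (fun i hi => hagree k i hi)] at h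
  -- the compact set
  set D : Set (ℕ → ℕ) := univ.pi (fun i => Iic (σfin i)) with hD
  have hDc : IsCompact D := isCompact_univ_pi (fun i => (finite_Iic _).isCompact)
  refine ⟨f '' D, hDc.image hf, image_subset_range _ _, ?_⟩
  -- intersection of closures is inside f '' D
  letI := TopologicalSpace.upgradeIsCompletelyMetrizable α
  have hsub : (⋂ k, closure (f '' Eset σfin k)) ⊆ f '' D := by
    intro x hx
    simp only [mem_iInter] at hx
    have hex : ∀ k : ℕ, ∃ β ∈ Eset σfin k, dist x (f β) < 1 / (k + 1) := by
      intro k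
      have := (Metric.mem_closure_iff).mp (hx k) (1 / (k + 1)) (by positivity)
      obtain ⟨b, ⟨β, hβ, rfl⟩, hd⟩ := this
      exact ⟨β, hβ, hd⟩
    choose βs hβs hdist using hex
    set b : ℕ → ℕ := fun i => max (σfin i) ((Finset.range (i + 1)).sup (fun k => βs k i)) with hb
    have hmemK : ∀ k, βs k ∈ univ.pi (fun i => Iic (b i)) := by
      intro k
      rw [mem_univ_pi]
      intro i
      rcases lt_or_ge i k with hik | hik
      · exact le_trans (hβs k i hik) (le_max_left _ _)
      · exact le_trans (Finset.le_sup (f := fun k => βs k i)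
          (Finset.mem_range.mpr (Nat.lt_succ_of_le hik))) (le_max_right _ _)
    have hKc : IsCompact (univ.pi (fun i => Iic (b i))) :=
      isCompact_univ_pi (fun i => (finite_Iic _).isCompact)
    obtain ⟨binf, hbinf, φ, hφ, hconv⟩ := hKc.tendsto_subseq hmemK
    have hcoord : ∀ i, Tendsto (fun j => βs (φ j) i) atTop (𝓝 (binf i)) := by
      intro i
      exact (tendsto_pi_nhds.mp hconv) i
    have hbinfD : binf ∈ D := by
      rw [hD, mem_univ_pi]
      intro i
      have h1 : ∀ᶠ j in atTop, βs (φ j) i = binf i := by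
        have := hcoord i
        rwa [nhds_discrete, tendsto_pure] at this
      have h2 : ∀ᶠ j in atTop, i < φ j := (hφ.tendsto_atTop.eventually_gt_atTop i)
      obtain ⟨j, hj1, hj2⟩ := (h1.and h2).exists
      rw [← hj1]
      exact hβs (φ j) i hj2
    refine ⟨binf, hbinfD, ?_⟩
    have h1 : Tendsto (fun j => f (βs (φ j))) atTop (𝓝 (f binf)) := (hf.tendsto binf).comp hconv
    have h2 : Tendsto (fun j => f (βs (φ j))) atTop (𝓝 x) := by
      rw [tendsto_iff_dist_tendsto_zero]
      apply squeeze_zero (fun j => dist_nonneg)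
        (fun j => (dist_comm (f (βs (φ j))) x) ▸ (hdist (φ j)).le)
      have : Tendsto (fun j : ℕ => 1 / ((j : ℝ) + 1)) atTop (𝓝 0) := tendsto_one_div_add_atTop_nhds_zero_nat
      exact this.comp (tendsto_natCast_atTop_atTop.comp hφ.tendsto_atTop)
    exact tendsto_nhds_unique h1 h2
  -- conclude
  have hmeas : ∀ k, NullMeasurableSet (closure (f '' Eset σfin k)) ν :=
    fun k => isClosed_closure.measurableSet.nullMeasurableSet
  have hanti : Antitone (fun k => closure (f '' Eset σfin k)) :=
    fun k l hkl => closure_mono (image_mono (Eset_antitone σfin hkl))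
  have hint : ν (⋂ k, closure (f '' Eset σfin k)) = ⨅ k, ν (closure (f '' Eset σfin k)) :=
    hanti.measure_iInter hmeas ⟨0, (measure_lt_top ν _).ne⟩
  have hfin : t ≤ ν (⋂ k, closure (f '' Eset σfin k)) + ε := by
    rw [hint, ENNReal.iInf_add]
    refine le_iInf (fun k => ?_)
    have h := hPfin k
    simp only [hP] at h
    exact le_trans h.le (add_le_add_left (measure_mono subset_closure) _)
  exact le_trans hfin (add_le_add_left (measure_mono hsub) _)


/-- **Universal measurability of analytic sets** (for a fixed finite measure):
an analytic set differs from a Borel set inside a Borel null set. -/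
theorem analytic_almost_borel {A : Set α} (hA : AnalyticSet A)
    (ν : Measure α) [IsFiniteMeasure ν] :
    ∃ B N : Set α, MeasurableSet B ∧ MeasurableSet N ∧ ν N = 0 ∧ A \ B ⊆ N ∧ B \ A ⊆ N := by
  rw [AnalyticSet] at hA
  rcases hA with rfl | ⟨f, hf, rfl⟩
  · exact ⟨∅, ∅, MeasurableSet.empty, MeasurableSet.empty, measure_empty, by simp, by simp⟩
  letI := TopologicalSpace.upgradeIsCompletelyMetrizable α
  have hKs : ∀ m : ℕ, ∃ K : Set α, IsCompact K ∧ K ⊆ range f ∧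
      ν (range f) ≤ ν K + ((m : ℝ≥0∞) + 1)⁻¹ := by
    intro m
    exact exists_isCompact_subset_range f hf ν (by simp)
  choose K hKc hKsub hKm using hKs
  set B := ⋃ m, K m with hB
  have hBmeas : MeasurableSet B :=
    MeasurableSet.iUnion (fun m => ((hKc m).isClosed).measurableSet)
  have hBsub : B ⊆ range f := iUnion_subset hKsub
  have hBν : ν (range f) ≤ ν B := by
    refine ENNReal.le_of_forall_pos_le_add (fun ε hε hfin => ?_)
    obtain ⟨m, hm⟩ := ENNReal.exists_inv_nat_lt (by exact_mod_cast hε.ne' : (ε : ℝ≥0∞) ≠ 0)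
    refine le_trans (hKm m) (add_le_add (measure_mono (subset_iUnion K m)) ?_)
    refine le_of_lt (lt_of_le_of_lt ?_ hm)
    exact ENNReal.inv_le_inv.mpr (by exact_mod_cast Nat.le_succ m)
  set H := toMeasurable ν (range f) with hH
  refine ⟨B, H \ B, hBmeas, (measurableSet_toMeasurable ν _).diff hBmeas, ?_, ?_, ?_⟩
  · have hsub : B ⊆ H := hBsub.trans (subset_toMeasurable ν _)
    have h1 : ν B ≤ ν H := measure_mono hsub
    have h2 : ν H = ν (range f) := measure_toMeasurable _
    have hEq : ν B = ν H := le_antisymm h1 (h2 ▸ hBν)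
    rw [measure_diff hsub hBmeas.nullMeasurableSet (measure_lt_top ν B).ne, ← hEq, tsub_self]
  · exact diff_subset_diff_left (subset_toMeasurable ν _)
  · intro x hx
    exact absurd (hBsub hx.1) hx.2



variable {γ X : Type*} [TopologicalSpace γ] [PolishSpace γ]
  [TopologicalSpace X] [PolishSpace X]

/-- `Qp f x σ n` : there is `β` in the section tree over `x` extending the prefix `σ|_n`. -/
def Qp (f : (ℕ → ℕ) → γ × X) (x : X) (σ : ℕ → ℕ) (n : ℕ) : Prop :=
  ∃ β, (f β).2 = x ∧ ∀ i < n, β i = σ i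

lemma Qp_congr {f : (ℕ → ℕ) → γ × X} {x : X} {σ σ' : ℕ → ℕ} {n : ℕ}
    (h : ∀ i < n, σ i = σ' i) (hq : Qp f x σ n) : Qp f x σ' n := by
  obtain ⟨β, hβ, hpre⟩ := hq
  exact ⟨β, hβ, fun i hi => (hpre i hi).trans (h i hi)⟩

lemma Qp_mono {f : (ℕ → ℕ) → γ × X} {x : X} {σ : ℕ → ℕ} {m n : ℕ}
    (h : m ≤ n) (hq : Qp f x σ n) : Qp f x σ m := by
  obtain ⟨β, hβ, hpre⟩ := hq
  exact ⟨β, hβ, fun i hi => hpre i (lt_of_lt_of_le hi h)⟩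

lemma Qp_step {f : (ℕ → ℕ) → γ × X} {x : X} {σ : ℕ → ℕ} {n : ℕ}
    (hq : Qp f x σ n) : ∃ k, Qp f x (Function.update σ n k) (n + 1) := by
  obtain ⟨β, hβ, hpre⟩ := hq
  refine ⟨β n, β, hβ, fun i hi => ?_⟩
  rcases Nat.lt_succ_iff_lt_or_eq.mp hi with hi' | rfl
  · rw [Function.update_of_ne hi'.ne, hpre i hi']
  · rw [Function.update_self]

/-- The approximating prefixes of the leftmost branch. -/
noncomputable def apprP (f : (ℕ → ℕ) → γ × X) (x : X) (hx : Qp f x (fun _ => 0) 0) :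
    (n : ℕ) → {σ : ℕ → ℕ // Qp f x σ n}
  | 0 => ⟨fun _ => 0, hx⟩
  | (n + 1) =>
    let p := apprP f x hx n
    ⟨Function.update p.1 n (@Nat.find _ (Classical.decPred _) (Qp_step p.2)),
      @Nat.find_spec _ (Classical.decPred _) (Qp_step p.2)⟩

/-- The leftmost branch of the section tree over `x` (or the zero sequence if the tree is empty). -/
noncomputable def Lsel (f : (ℕ → ℕ) → γ × X) : X → ℕ → ℕ := fun x =>
  @dite _ (Qp f x (fun _ => 0) 0) (Classical.dec _)
    (fun hx => fun i => (apprP f x hx (i + 1)).1 i) (fun _ => fun _ => 0)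

lemma apprP_agree {f : (ℕ → ℕ) → γ × X} {x : X} (hx : Qp f x (fun _ => 0) 0) :
    ∀ n, ∀ i < n, (apprP f x hx n).1 i = Lsel f x i := by
  intro n
  induction n with
  | zero => exact fun i hi => absurd hi (Nat.not_lt_zero i)
  | succ n ih =>
    intro i hi
    rcases Nat.lt_succ_iff_lt_or_eq.mp hi with hi' | rfl
    · show Function.update (apprP f x hx n).1 n _ i = _
      rw [Function.update_of_ne hi'.ne, ih i hi']
    · show Function.update (apprP f x hx i).1 i _ i = _
      rw [Function.update_self, Lsel, dif_pos hx]
      show _ = Function.update (apprP f x hx i).1 i _ i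
      rw [Function.update_self]

lemma Lsel_spec {f : (ℕ → ℕ) → γ × X} {x : X} (hx : Qp f x (fun _ => 0) 0) (n : ℕ) :
    Qp f x (Lsel f x) n :=
  Qp_congr (fun i hi => apprP_agree hx n i hi) (apprP f x hx n).2

lemma Lsel_find {f : (ℕ → ℕ) → γ × X} {x : X} (hx : Qp f x (fun _ => 0) 0) (i : ℕ) :
    Lsel f x i = @Nat.find _ (Classical.decPred _) (Qp_step (apprP f x hx i).2) := by
  simp only [Lsel, dif_pos hx]
  show Function.update (apprP f x hx i).1 i _ i = _
  rw [Function.update_self]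

/-- The leftmost branch lies in the section tree (the tree is closed). -/
lemma Lsel_mem {f : (ℕ → ℕ) → γ × X} (hf : Continuous f) {x : X}
    (hx : Qp f x (fun _ => 0) 0) : (f (Lsel f x)).2 = x := by
  have hconv : Tendsto (fun n => Classical.choose (Lsel_spec hx n)) atTop (𝓝 (Lsel f x)) := by
    rw [tendsto_pi_nhds]
    intro i
    rw [nhds_discrete, tendsto_pure]
    filter_upwards [eventually_gt_atTop i] with n hn
    exact (Classical.choose_spec (Lsel_spec hx n)).2 i hn
  have h1 : Tendsto (fun n => (f (Classical.choose (Lsel_spec hx n))).2) atTop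
      (𝓝 ((f (Lsel f x)).2)) := ((continuous_snd.comp hf).tendsto _).comp hconv
  have h2 : ∀ n, (f (Classical.choose (Lsel_spec hx n))).2 = x := fun n =>
    (Classical.choose_spec (Lsel_spec hx n)).1
  have h3 : Tendsto (fun n => (f (Classical.choose (Lsel_spec hx n))).2) atTop (𝓝 x) := by
    simp only [h2]; exact tendsto_const_nhds
  exact tendsto_nhds_unique h1 h3

/-- Characterization of prefixes of the leftmost branch by countably many section conditions. -/
lemma Lsel_charac {f : (ℕ → ℕ) → γ × X} {x : X} (hx : Qp f x (fun _ => 0) 0)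
    (σ : ℕ → ℕ) (n : ℕ) :
    (∀ i < n, Lsel f x i = σ i) ↔
      (Qp f x σ n ∧ ∀ j < n, ∀ k < σ j, ¬ Qp f x (Function.update σ j k) (j + 1)) := by
  constructor
  · intro h
    refine ⟨Qp_congr (fun i hi => h i hi) (Lsel_spec hx n), ?_⟩
    intro j hj k hk hQk
    have hagree : ∀ i < j + 1, Function.update σ j k i = Function.update (apprP f x hx j).1 j k i := by
      intro i hi
      rcases Nat.lt_succ_iff_lt_or_eq.mp hi with hi' | rfl
      · rw [Function.update_of_ne hi'.ne, Function.update_of_ne hi'.ne,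
          apprP_agree hx j i hi', h i (hi'.trans hj)]
      · rw [Function.update_self, Function.update_self]
    have hQk' : Qp f x (Function.update (apprP f x hx j).1 j k) (j + 1) := Qp_congr hagree hQk
    have hle := @Nat.find_min' _ (Classical.decPred _) (Qp_step (apprP f x hx j).2) k hQk'
    rw [← Lsel_find hx j] at hle
    exact absurd (lt_of_le_of_lt hle hk) (by rw [h j hj]; exact lt_irrefl _)
  · rintro ⟨hQ, hmin⟩
    intro i hi
    induction i using Nat.strong_induction_on with
    | _ i ih =>
    have ih' : ∀ i' < i, Lsel f x i' = σ i' := fun i' hi' => ih i' hi' (hi'.trans hi)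
    have hagree : ∀ i' < i + 1,
        Function.update (apprP f x hx i).1 i (σ i) i' = σ i' := by
      intro i' hi'
      rcases Nat.lt_succ_iff_lt_or_eq.mp hi' with h2 | rfl
      · rw [Function.update_of_ne h2.ne, apprP_agree hx i i' h2, ih' i' h2]
      · rw [Function.update_self]
    have hcand : Qp f x (Function.update (apprP f x hx i).1 i (σ i)) (i + 1) :=
      Qp_congr (fun i' hi' => (hagree i' hi').symm) (Qp_mono (Nat.succ_le_of_lt hi) hQ)
    have hle : Lsel f x i ≤ σ i := by
      rw [Lsel_find hx i]
      exact @Nat.find_min' _ (Classical.decPred _) _ _ hcand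
    rcases lt_or_eq_of_le hle with hlt | heq
    · exfalso
      have hspec := @Nat.find_spec _ (Classical.decPred _) (Qp_step (apprP f x hx i).2)
      rw [← Lsel_find hx i] at hspec
      have hagree2 : ∀ i' < i + 1,
          Function.update (apprP f x hx i).1 i (Lsel f x i) i' =
            Function.update σ i (Lsel f x i) i' := by
        intro i' hi'
        rcases Nat.lt_succ_iff_lt_or_eq.mp hi' with h2 | rfl
        · rw [Function.update_of_ne h2.ne, Function.update_of_ne h2.ne,
            apprP_agree hx i i' h2, ih' i' h2]
        · rw [Function.update_self, Function.update_self]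
      exact hmin i hi (Lsel f x i) hlt (Qp_congr hagree2 hspec)
    · exact heq


/-- The section-prefix sets, which are analytic. -/
def Afun (f : (ℕ → ℕ) → γ × X) (σ : ℕ → ℕ) (n : ℕ) : Set X := {x | Qp f x σ n}

/-- A countable family containing all the sets `Afun f σ n`. -/
def Afam (f : (ℕ → ℕ) → γ × X) (s : List ℕ) : Set X :=
  Afun f (fun i => s.getD i 0) s.length

lemma Afun_analytic {f : (ℕ → ℕ) → γ × X} (hf : Continuous f) (σ : ℕ → ℕ) (n : ℕ) :
    AnalyticSet (Afun f σ n) := by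
  have hcyl : IsClosed {β : ℕ → ℕ | ∀ i < n, β i = σ i} := by
    have : {β : ℕ → ℕ | ∀ i < n, β i = σ i} =
        ⋂ (i : ℕ) (_ : i < n), (fun β : ℕ → ℕ => β i) ⁻¹' {σ i} := by
      ext β; simp [Set.mem_iInter]
    rw [this]
    exact isClosed_iInter (fun i => isClosed_iInter (fun _ =>
      (isClosed_singleton).preimage (continuous_apply i)))
  have himg : Afun f σ n = (fun β => (f β).2) '' {β : ℕ → ℕ | ∀ i < n, β i = σ i} := by
    ext x
    constructor
    · rintro ⟨β, hβ, hpre⟩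
      exact ⟨β, hpre, hβ⟩
    · rintro ⟨β, hpre, rfl⟩
      exact ⟨β, rfl, hpre⟩
  rw [himg]
  exact (hcyl.analyticSet).image_of_continuous (continuous_snd.comp hf)

lemma Afun_eq_Afam (f : (ℕ → ℕ) → γ × X) (σ : ℕ → ℕ) (n : ℕ) :
    Afun f σ n = Afam f (List.ofFn (fun i : Fin n => σ i)) := by
  have hlen : (List.ofFn (fun i : Fin n => σ i)).length = n := List.length_ofFn
  have hg : ∀ i < n, (List.ofFn (fun i : Fin n => σ i)).getD i 0 = σ i := by
    intro i hi
    rw [List.getD_eq_getElem _ _ (by rw [hlen]; exact hi), List.getElem_ofFn]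
  ext x
  constructor
  · intro hq
    rw [Afam, hlen]
    exact Qp_congr (fun i hi => (hg i hi).symm) hq
  · intro hq
    rw [Afam, hlen] at hq
    exact Qp_congr hg hq

/-- The exact-prefix event of the leftmost branch. -/
def Pref (f : (ℕ → ℕ) → γ × X) (σ : ℕ → ℕ) (n : ℕ) : Set X :=
  Afun f σ n ∩ ⋂ (j : ℕ) (_ : j < n) (k : ℕ) (_ : k < σ j),
    (Afun f (Function.update σ j k) (j + 1))ᶜ

lemma mem_Pref_iff {f : (ℕ → ℕ) → γ × X} {x : X} (hx : Qp f x (fun _ => 0) 0)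
    (σ : ℕ → ℕ) (n : ℕ) : x ∈ Pref f σ n ↔ ∀ i < n, Lsel f x i = σ i := by
  rw [Lsel_charac hx σ n]
  simp only [Pref, Set.mem_inter_iff, Set.mem_iInter, Set.mem_compl_iff]
  rfl

lemma measurableSet_Pref (f : (ℕ → ℕ) → γ × X) (σ : ℕ → ℕ) (n : ℕ) :
    MeasurableSet[MeasurableSpace.generateFrom (Set.range (Afam f))] (Pref f σ n) := by
  apply MeasurableSet.inter
  · rw [Afun_eq_Afam]
    exact MeasurableSpace.measurableSet_generateFrom (Set.mem_range_self _)
  · refine MeasurableSet.iInter (fun j => MeasurableSet.iInter (fun _ =>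
      MeasurableSet.iInter (fun k => MeasurableSet.iInter (fun _ => MeasurableSet.compl ?_))))
    rw [Afun_eq_Afam]
    exact MeasurableSpace.measurableSet_generateFrom (Set.mem_range_self _)

lemma measurableSet_dom (f : (ℕ → ℕ) → γ × X) :
    MeasurableSet[MeasurableSpace.generateFrom (Set.range (Afam f))]
      {x | Qp f x (fun _ => 0) 0} := by
  have : {x | Qp f x (fun _ => 0) 0} = Afun f (fun _ => 0) 0 := rfl
  rw [this, Afun_eq_Afam]
  exact MeasurableSpace.measurableSet_generateFrom (Set.mem_range_self _)

lemma measurable_Lsel (f : (ℕ → ℕ) → γ × X) :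
    Measurable[MeasurableSpace.generateFrom (Set.range (Afam f))] (Lsel f) := by
  set 𝓢 := MeasurableSpace.generateFrom (Set.range (Afam f)) with h𝓢
  rw [measurable_pi_iff]
  intro i
  apply measurable_to_countable'
  intro k
  have hdecomp : (Lsel f · i) ⁻¹' {k} =
      ({x | Qp f x (fun _ => 0) 0}ᶜ ∩ {x : X | 0 = k}) ∪
      ⋃ (s : List ℕ) (_ : s.length = i + 1 ∧ s.getD i 0 = k),
        Pref f (fun j => s.getD j 0) (i + 1) := by
    ext x
    simp only [Set.mem_preimage, Set.mem_singleton_iff, Set.mem_union, Set.mem_inter_iff,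
      Set.mem_compl_iff, Set.mem_setOf_eq, Set.mem_iUnion]
    by_cases hx : Qp f x (fun _ => 0) 0
    · constructor
      · intro hk
        refine Or.inr ⟨List.ofFn (fun j : Fin (i + 1) => Lsel f x j), ⟨?_, ?_⟩, ?_⟩
        · exact List.length_ofFn
        · rw [List.getD_eq_getElem _ _ (by simp), List.getElem_ofFn]; exact hk
        · rw [mem_Pref_iff hx]
          intro j hj
          rw [List.getD_eq_getElem _ _ (by simpa using hj), List.getElem_ofFn]
      · rintro (⟨hnx, _⟩ | ⟨s, ⟨hlen, hget⟩, hmem⟩)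
        · exact absurd hx hnx
        · rw [mem_Pref_iff hx] at hmem
          rw [hmem i (Nat.lt_succ_self i), hget]
    · constructor
      · intro hk
        refine Or.inl ⟨hx, ?_⟩
        simpa [Lsel, dif_neg hx] using hk
      · rintro (⟨_, hk⟩ | ⟨s, _, hmem⟩)
        · simp [Lsel, dif_neg hx, ← hk]
        · exact absurd (Qp_congr (fun i hi => absurd hi (Nat.not_lt_zero i))
            (Qp_mono (Nat.zero_le _) hmem.1)) hx
  rw [hdecomp]
  apply MeasurableSet.union
  · apply MeasurableSet.inter (measurableSet_dom f).compl
    by_cases hk : (0 : ℕ) = k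
    · simp only [hk]; simpa using MeasurableSet.univ
    · have : {x : X | (0:ℕ) = k} = ∅ := by ext x; simp [hk]
      rw [this]; exact MeasurableSet.empty
  · exact MeasurableSet.iUnion (fun s => MeasurableSet.iUnion (fun _ => measurableSet_Pref f _ _))



variable [MeasurableSpace γ] [BorelSpace γ] [MeasurableSpace X] [BorelSpace X]

/-- **Measurable selection (von Neumann / Jankov), measure-theoretic version.**
For an analytic set `W ⊆ γ × X` and a finite measure `ν` on `X`, there is a selector
`u : X → Option γ` which picks, for every `x` (with no exceptions), a point of the section
of `W` over `x` whenever this section is nonempty, and whose preimages of measurable sets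
are Borel up to a fixed `ν`-null set. -/
theorem exists_measurable_selector {W : Set (γ × X)} (hW : AnalyticSet W)
    (ν : Measure X) [IsFiniteMeasure ν] :
    ∃ (u : X → Option γ) (N : Set X), MeasurableSet N ∧ ν N = 0 ∧
      (∀ x, (∃ r, (r, x) ∈ W) → ∃ r, u x = some r ∧ (r, x) ∈ W) ∧
      (∀ x, ¬(∃ r, (r, x) ∈ W) → u x = none) ∧
      (∀ E : Set (Option γ), MeasurableSet E →
        ∃ B, MeasurableSet B ∧ u ⁻¹' E \ B ⊆ N ∧ B \ u ⁻¹' E ⊆ N) := by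
  classical
  rw [AnalyticSet] at hW
  rcases hW with rfl | ⟨f, hf, rfl⟩
  · refine ⟨fun _ => none, ∅, MeasurableSet.empty, measure_empty, ?_, fun _ _ => rfl, ?_⟩
    · rintro x ⟨r, hr⟩; exact absurd hr (Set.notMem_empty _)
    · intro E hE
      by_cases hn : (none : Option γ) ∈ E
      · refine ⟨Set.univ, MeasurableSet.univ, ?_, ?_⟩
        · intro x hx; simp at hx
        · intro x hx; exact absurd (hn : (fun _ => (none : Option γ)) x ∈ E) hx.2
      · refine ⟨∅, MeasurableSet.empty, ?_, ?_⟩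
        · intro x hx; exact absurd (hx.1 : (none : Option γ) ∈ E) hn
        · intro x hx; exact absurd hx.1 (Set.notMem_empty _)
  · -- W = range f
    set Dom : Set X := {x | Qp f x (fun _ => 0) 0} with hDom
    set u : X → Option γ := fun x =>
      if hx : Qp f x (fun _ => 0) 0 then some ((f (Lsel f x)).1) else none with hu
    -- Borel approximation of the generating analytic sets
    have hBN : ∀ s : List ℕ, ∃ B N : Set X, MeasurableSet B ∧ MeasurableSet N ∧ ν N = 0 ∧
        Afam f s \ B ⊆ N ∧ B \ Afam f s ⊆ N := fun s =>
      analytic_almost_borel (Afun_analytic hf _ _) ν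
    choose Bs Ns hBs hNs hNs0 hsub1 hsub2 using hBN
    set N : Set X := ⋃ s : List ℕ, Ns s with hN
    have hNmeas : MeasurableSet N := MeasurableSet.iUnion hNs
    have hN0 : ν N = 0 := measure_iUnion_null hNs0
    -- every 𝓢-measurable set is Borel modulo N
    have hkey : ∀ S : Set X,
        MeasurableSet[MeasurableSpace.generateFrom (Set.range (Afam f))] S →
        ∃ B, MeasurableSet B ∧ S \ B ⊆ N ∧ B \ S ⊆ N := by
      set m' : MeasurableSpace X :=
        { MeasurableSet' := fun S => ∃ B, MeasurableSet B ∧ S \ B ⊆ N ∧ B \ S ⊆ N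
          measurableSet_empty := ⟨∅, MeasurableSet.empty, by simp, by simp⟩
          measurableSet_compl := by
            rintro S ⟨B, hB, h1, h2⟩
            exact ⟨Bᶜ, hB.compl, fun x hx => h2 ⟨not_not.mp hx.2, hx.1⟩,
              fun x hx => h1 ⟨not_not.mp hx.2, hx.1⟩⟩
          measurableSet_iUnion := by
            intro g hg
            choose B hB h1 h2 using hg
            refine ⟨⋃ i, B i, MeasurableSet.iUnion hB, ?_, ?_⟩
            · rintro x ⟨hx1, hx2⟩
              obtain ⟨i, hi⟩ := Set.mem_iUnion.mp hx1
              exact h1 i ⟨hi, fun hb => hx2 (Set.mem_iUnion.mpr ⟨i, hb⟩)⟩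
            · rintro x ⟨hx1, hx2⟩
              obtain ⟨i, hi⟩ := Set.mem_iUnion.mp hx1
              exact h2 i ⟨hi, fun hb => hx2 (Set.mem_iUnion.mpr ⟨i, hb⟩)⟩ } with hm'
      have hle : MeasurableSpace.generateFrom (Set.range (Afam f)) ≤ m' := by
        apply MeasurableSpace.generateFrom_le
        rintro S ⟨s, rfl⟩
        exact ⟨Bs s, hBs s, fun x hx => Set.mem_iUnion.mpr ⟨s, hsub1 s hx⟩,
          fun x hx => Set.mem_iUnion.mpr ⟨s, hsub2 s hx⟩⟩
      exact fun S hS => hle S hS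
    refine ⟨u, N, hNmeas, hN0, ?_, ?_, ?_⟩
    · rintro x ⟨r, β, hβ⟩
      have hx : Qp f x (fun _ => 0) 0 :=
        ⟨β, by rw [hβ], fun i hi => absurd hi (Nat.not_lt_zero i)⟩
      refine ⟨(f (Lsel f x)).1, by rw [hu]; exact dif_pos hx, ?_⟩
      have h2 : ((f (Lsel f x)).1, x) = f (Lsel f x) :=
        Prod.ext rfl (Lsel_mem hf hx).symm
      rw [h2]
      exact Set.mem_range_self _
    · intro x hnx
      have hx : ¬ Qp f x (fun _ => 0) 0 := by
        rintro ⟨β, hβ, -⟩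
        exact hnx ⟨(f β).1, β, by rw [← hβ]⟩
      rw [hu]; exact dif_neg hx
    · intro E hE
      apply hkey
      have hdecomp : u ⁻¹' E =
          (Dom ∩ ((fun x => (f (Lsel f x)).1) ⁻¹' (some ⁻¹' E))) ∪
          (Domᶜ ∩ {x : X | (none : Option γ) ∈ E}) := by
        ext x
        simp only [Set.mem_preimage, Set.mem_union, Set.mem_inter_iff, Set.mem_compl_iff,
          Set.mem_setOf_eq, hu, hDom]
        by_cases hx : Qp f x (fun _ => 0) 0
        · rw [dif_pos hx]
          exact ⟨fun h => Or.inl ⟨hx, h⟩, fun h => h.elim (fun h => h.2)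
            (fun h => absurd hx h.1)⟩
        · rw [dif_neg hx]
          exact ⟨fun h => Or.inr ⟨hx, h⟩, fun h => h.elim (fun h => absurd h.1 hx)
            (fun h => h.2)⟩
      rw [hdecomp]
      have hmg : Measurable[MeasurableSpace.generateFrom (Set.range (Afam f))]
          (fun x => (f (Lsel f x)).1) :=
        ((continuous_fst.comp hf).measurable).comp (measurable_Lsel f)
      have hcst : MeasurableSet[MeasurableSpace.generateFrom (Set.range (Afam f))]
          {x : X | (none : Option γ) ∈ E} := by
        by_cases hn : (none : Option γ) ∈ E
        · have h : {x : X | (none : Option γ) ∈ E} = Set.univ := by ext x; simp [hn]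
          rw [h]; exact @MeasurableSet.univ X (MeasurableSpace.generateFrom (Set.range (Afam f)))
        · have h : {x : X | (none : Option γ) ∈ E} = ∅ := by ext x; simp [hn]
          rw [h]; exact @MeasurableSet.empty X (MeasurableSpace.generateFrom (Set.range (Afam f)))
      exact MeasurableSet.union
        (MeasurableSet.inter (measurableSet_dom f) (hmg (measurableSet_some_preimage hE)))
        (MeasurableSet.inter (measurableSet_dom f).compl hcst)


/-- Factorization of a product-measurable set through a measurable map to `ℕ → Bool`. -/
theorem exists_factorization {S : Type*} [mS : MeasurableSpace S] {Ω : Type*}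
    (mΩ : MeasurableSpace Ω) {Z : Set (S × Ω)}
    (hZ : MeasurableSet[mS.prod mΩ] Z) :
    ∃ (g : Ω → (ℕ → Bool)) (W : Set (S × (ℕ → Bool))),
      Measurable[mΩ] g ∧ MeasurableSet W ∧ Z = (fun q => (q.1, g q.2)) ⁻¹' W := by
  classical
  set m' : MeasurableSpace (S × Ω) :=
    { MeasurableSet' := fun Z => ∃ (g : Ω → (ℕ → Bool)) (W : Set (S × (ℕ → Bool))),
        Measurable[mΩ] g ∧ MeasurableSet W ∧ Z = (fun q => (q.1, g q.2)) ⁻¹' W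
      measurableSet_empty := ⟨fun _ _ => false, ∅, measurable_const, MeasurableSet.empty, by simp⟩
      measurableSet_compl := by
        rintro Z ⟨g, W, hg, hW, rfl⟩
        exact ⟨g, Wᶜ, hg, hW.compl, rfl⟩
      measurableSet_iUnion := by
        intro Zs hZs
        choose gs Ws hgs hWs hZs using hZs
        set e := Nat.pairEquiv
        set g : Ω → (ℕ → Bool) := fun ω m => gs (e.symm m).1 ω (e.symm m).2 with hgdef
        have hgmeas : Measurable[mΩ] g := by
          rw [measurable_pi_iff]
          intro m
          exact (measurable_pi_apply _).comp (hgs (e.symm m).1)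
        set π : ℕ → (ℕ → Bool) → (ℕ → Bool) := fun i b j => b (e (i, j)) with hπdef
        have hπmeas : ∀ i, Measurable (π i) := by
          intro i
          rw [measurable_pi_iff]
          intro j
          exact measurable_pi_apply _
        have hπg : ∀ i ω, π i (g ω) = gs i ω := by
          intro i ω
          funext j
          simp only [hπdef, hgdef, Equiv.symm_apply_apply]
        refine ⟨g, ⋃ i, (fun q : S × (ℕ → Bool) => (q.1, π i q.2)) ⁻¹' (Ws i),
          hgmeas, MeasurableSet.iUnion (fun i =>
            (measurable_fst.prodMk ((hπmeas i).comp measurable_snd)) (hWs i)), ?_⟩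
        rw [Set.preimage_iUnion]
        refine Set.iUnion_congr (fun i => ?_)
        rw [hZs i]
        ext q
        simp [hπg] }
  have hle : mS.prod mΩ ≤ m' := by
    rw [MeasurableSpace.prod]
    apply sup_le
    · intro Z hZ
      obtain ⟨A, hA, rfl⟩ := hZ
      exact ⟨fun _ _ => false, A ×ˢ Set.univ, measurable_const,
        hA.prod MeasurableSet.univ, by ext q; simp⟩
    · intro Z hZ
      obtain ⟨B, hB, rfl⟩ := hZ
      refine ⟨fun ω _ => decide (ω ∈ B), Set.univ ×ˢ {b : ℕ → Bool | b 0 = true}, ?_, ?_, ?_⟩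
      · rw [measurable_pi_iff]
        intro j
        have : (fun ω => decide (ω ∈ B)) ⁻¹' {true} = B := by ext ω; simp
        exact measurable_to_countable' (fun b => by
          rcases Bool.dichotomy b with rfl | rfl
          · have : (fun ω => decide (ω ∈ B)) ⁻¹' {false} = Bᶜ := by ext ω; simp
            rw [this]; exact hB.compl
          · rw [this]; exact hB)
      · have h : {b : ℕ → Bool | b 0 = true} = (fun b : ℕ → Bool => b 0) ⁻¹' {true} := rfl
        rw [h]
        exact MeasurableSet.univ.prod (measurable_pi_apply 0 (MeasurableSet.singleton true))
      · ext q; simp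
  exact hle Z hZ


lemma measurableSet_option_iff {α : Type u} [MeasurableSpace α] {E : Set (Option α)} :
    MeasurableSet E ↔ MeasurableSet (some ⁻¹' E) := by
  classical
  refine ⟨measurableSet_some_preimage, fun h => ?_⟩
  have hgoal : MeasurableSet[MeasurableSpace.comap (Equiv.optionEquivSumPUnit.{u, u} α)
      inferInstance] E := by
    rw [MeasurableSpace.measurableSet_comap]
    refine ⟨Sum.inl '' (some ⁻¹' E) ∪ (if (none : Option α) ∈ E then Set.range Sum.inr else ∅),
      ?_, ?_⟩
    · apply MeasurableSet.union (measurableSet_inl_image.mpr h)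
      by_cases hn : (none : Option α) ∈ E
      · rw [if_pos hn]; exact measurableSet_range_inr
      · rw [if_neg hn]; exact MeasurableSet.empty
    · ext o
      cases o with
      | none =>
        simp only [Set.mem_preimage, Equiv.optionEquivSumPUnit_none, Set.mem_union, Set.mem_image]
        by_cases hn : (none : Option α) ∈ E
        · simp [hn]
        · simp [hn]
      | some a =>
        simp only [Set.mem_preimage, Equiv.optionEquivSumPUnit_some, Set.mem_union, Set.mem_image]
        constructor
        · rintro (⟨b, hb, hba⟩ | hr)
          · cases Sum.inl.inj hba; exact hb
          · exfalso
            by_cases hn : (none : Option α) ∈ E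
            · rw [if_pos hn] at hr
              obtain ⟨pu, hpu⟩ := hr
              cases hpu
            · rw [if_neg hn] at hr
              exact hr
        · intro hb
          exact Or.inl ⟨a, hb, rfl⟩
  exact hgoal

/-- Measurable selection for a product-measurable set over an abstract measurable space. -/
theorem combined_selector {S : Type*} [mS : MeasurableSpace S] [StandardBorelSpace S]
    {Ω : Type*} {mΩ : MeasurableSpace Ω} (P' : Measure Ω) [IsFiniteMeasure P']
    {Z : Set (S × Ω)} (hZ : MeasurableSet[mS.prod mΩ] Z) :
    ∃ (t : Ω → Option S) (N : Set Ω), MeasurableSet[mΩ] N ∧ P' N = 0 ∧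
      (∀ ω, (∃ θ, (θ, ω) ∈ Z) → ∃ θ, t ω = some θ ∧ (θ, ω) ∈ Z) ∧
      (∀ ω, ¬(∃ θ, (θ, ω) ∈ Z) → t ω = none) ∧
      ∀ E : Set (Option S), MeasurableSet E →
        ∃ B, MeasurableSet[mΩ] B ∧ t ⁻¹' E \ B ⊆ N ∧ B \ t ⁻¹' E ⊆ N := by
  classical
  haveI : PolishSpace Bool := inferInstance
  obtain ⟨g, W, hg, hW, hZW⟩ := exists_factorization mΩ hZ
  obtain ⟨e, he⟩ := exists_measurableEmbedding_real S
  set W' : Set (ℝ × (ℕ → Bool)) := (fun q : S × (ℕ → Bool) => (e q.1, q.2)) '' W with hW'def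
  have hW' : MeasurableSet W' := (he.prodMap MeasurableEmbedding.id).measurableSet_image' hW
  have hW'a : AnalyticSet W' := hW'.analyticSet
  set ν : Measure (ℕ → Bool) := P'.map g with hν
  haveI : IsFiniteMeasure ν :=
    ⟨by rw [hν, Measure.map_apply hg MeasurableSet.univ]; exact measure_lt_top P' _⟩
  obtain ⟨u, N₀, hN₀m, hN₀0, husel, hunone, hupre⟩ :=
    exists_measurable_selector (γ := ℝ) (X := ℕ → Bool) hW'a ν
  set einv : ℝ → Option S := fun r => if h : ∃ s0, e s0 = r then some h.choose else none
    with heinv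
  set t : Ω → Option S := fun ω => (u (g ω)).bind einv with ht
  refine ⟨t, g ⁻¹' N₀, hg hN₀m, ?_, ?_, ?_, ?_⟩
  · rw [← Measure.map_apply hg hN₀m]; exact hN₀0
  · rintro ω ⟨θ, hθ⟩
    have hθW : (θ, g ω) ∈ W := by
      have := hZW ▸ hθ
      exact this
    obtain ⟨r, hur, hrW'⟩ := husel (g ω) ⟨e θ, ⟨(θ, g ω), hθW, rfl⟩⟩
    obtain ⟨q, hqW, hqe⟩ := hrW'
    have hq1 : e q.1 = r := (Prod.ext_iff.mp hqe).1
    have hq2 : q.2 = g ω := (Prod.ext_iff.mp hqe).2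
    have hmemZ : (q.1, ω) ∈ Z := by
      rw [hZW]
      show (q.1, g ω) ∈ W
      rw [← hq2]
      exact hqW
    have hex : ∃ s0, e s0 = r := ⟨q.1, hq1⟩
    have hchoose : hex.choose = q.1 := he.injective (hex.choose_spec.trans hq1.symm)
    refine ⟨q.1, ?_, hmemZ⟩
    rw [ht]
    show (u (g ω)).bind einv = some q.1
    rw [hur]
    show einv r = some q.1
    rw [heinv]
    simp only [dif_pos hex, hchoose]
  · intro ω hnθ
    have hnr : ¬ ∃ r, (r, g ω) ∈ W' := by
      rintro ⟨r, q, hqW, hqe⟩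
      have hq2 : q.2 = g ω := (Prod.ext_iff.mp hqe).2
      exact hnθ ⟨q.1, by rw [hZW]; show (q.1, g ω) ∈ W; rw [← hq2]; exact hqW⟩
    have := hunone (g ω) hnr
    rw [ht]
    show (u (g ω)).bind einv = none
    rw [this]
    rfl
  · intro E hE
    set E' : Set (Option ℝ) := (fun o : Option ℝ => o.bind einv) ⁻¹' E with hE'def
    have hsomeE' : some ⁻¹' E' = (e '' (some ⁻¹' E)) ∪
        ((Set.range e)ᶜ ∩ {r : ℝ | (none : Option S) ∈ E}) := by
      ext r
      simp only [Set.mem_preimage, hE'def, Set.mem_union, Set.mem_image,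
        Set.mem_inter_iff, Set.mem_compl_iff, Set.mem_setOf_eq, Set.mem_range]
      by_cases h : ∃ s0, e s0 = r
      · have hbind : (some r).bind einv = some h.choose := by
          simp only [Option.bind_some, heinv]; rw [dif_pos h]
        rw [hbind]
        constructor
        · intro hmem
          exact Or.inl ⟨h.choose, hmem, h.choose_spec⟩
        · rintro (⟨s0, hs0, hs0r⟩ | ⟨hne, _⟩)
          · have : h.choose = s0 := he.injective (h.choose_spec.trans hs0r.symm)
            rw [this]; exact hs0
          · exact absurd h hne
      · have hbind : (some r).bind einv = none := by
          simp only [Option.bind_some, heinv]; rw [dif_neg h]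
        rw [hbind]
        constructor
        · intro hmem
          exact Or.inr ⟨fun ⟨s0, hs0⟩ => h ⟨s0, hs0⟩, hmem⟩
        · rintro (⟨s0, _, hs0r⟩ | ⟨_, hmem⟩)
          · exact absurd ⟨s0, hs0r⟩ h
          · exact hmem
    have hE' : MeasurableSet E' := by
      rw [measurableSet_option_iff, hsomeE']
      apply MeasurableSet.union (he.measurableSet_image' (measurableSet_some_preimage hE))
      apply MeasurableSet.inter he.measurableSet_range.compl
      by_cases hn : (none : Option S) ∈ E
      · have h : {r : ℝ | (none : Option S) ∈ E} = Set.univ := by ext r; simp [hn]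
        rw [h]; exact MeasurableSet.univ
      · have h : {r : ℝ | (none : Option S) ∈ E} = ∅ := by ext r; simp [hn]
        rw [h]; exact MeasurableSet.empty
    obtain ⟨B₀, hB₀, hd1, hd2⟩ := hupre E' hE'
    refine ⟨g ⁻¹' B₀, hg hB₀, ?_, ?_⟩
    · intro ω hω
      exact hd1 ⟨hω.1, hω.2⟩
    · intro ω hω
      exact hd2 ⟨hω.1, hω.2⟩


/-- Existence of zeros of `Gₙ` near `θbar`, via the quantitative inverse function theorem. -/
theorem roots_near {E : Type*} [NormedAddCommGroup E] [NormedSpace ℝ E] [CompleteSpace E]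
    {Gn : ℕ → E → E} {Gl : E → E} {M : Set E} {θbar : E}
    (hM : IsOpen M) (hθ : θbar ∈ M)
    (h0 : Tendsto (fun n => Gn n θbar) atTop (𝓝 0))
    (hGl0 : Gl θbar = 0)
    (hsm : ∀ n, ContDiffOn ℝ 1 (Gn n) M) (hsml : ContDiffOn ℝ 1 Gl M)
    (hunif : TendstoUniformlyOn (fun n θ => fderiv ℝ (Gn n) θ) (fun θ => fderiv ℝ Gl θ) atTop M)
    (hinv : IsUnit (fderiv ℝ Gl θbar)) :
    ∀ ε > (0:ℝ), ∀ᶠ n in atTop, ∃ θ, θ ∈ M ∧ dist θ θbar ≤ ε ∧ Gn n θ = 0 := by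
  intro ε hε
  rcases subsingleton_or_nontrivial E with hsub | hnt
  · refine Filter.Eventually.of_forall (fun n => ⟨θbar, hθ, by simp [hε.le], ?_⟩)
    exact Subsingleton.elim _ _
  obtain ⟨v, hv⟩ := hinv
  set A : E →L[ℝ] E := fderiv ℝ Gl θbar with hA
  set Ainv : E →L[ℝ] E := ((v⁻¹ : (E →L[ℝ] E)ˣ) : E →L[ℝ] E) with hAinv
  have hright : ∀ y, A (Ainv y) = y := by
    intro y
    have h1 : A * Ainv = 1 := by rw [← hv, hAinv, Units.mul_inv]
    calc A (Ainv y) = (A * Ainv) y := rfl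
    _ = y := by rw [h1]; rfl
  set f'symm : A.NonlinearRightInverse :=
    ⟨fun y => Ainv y, ‖Ainv‖₊, fun y => Ainv.le_opNorm y, hright⟩ with hf'symm
  have hAinv_ne : Ainv ≠ 0 := by
    intro h0'
    obtain ⟨x, hx⟩ := exists_ne (0 : E)
    have : x = A (Ainv x) := (hright x).symm
    rw [h0'] at this
    simp at this
    exact hx this
  have hNpos : (0:ℝ) < ‖Ainv‖ := norm_pos_iff.mpr hAinv_ne
  set c : ℝ := ‖Ainv‖⁻¹ / 2 with hc
  have hcpos : 0 < c := by positivity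
  -- continuity of the limiting derivative at θbar
  have hcont : ContinuousOn (fun z => fderiv ℝ Gl z) M :=
    hsml.continuousOn_fderiv_of_isOpen hM le_rfl
  have hcontAt : ContinuousAt (fun z => fderiv ℝ Gl z) θbar :=
    hcont.continuousAt (hM.mem_nhds hθ)
  obtain ⟨δ1, hδ1pos, hδ1⟩ := Metric.continuousAt_iff.mp hcontAt (c/2) (by positivity)
  obtain ⟨δ2, hδ2pos, hδ2⟩ := Metric.isOpen_iff.mp hM θbar hθ
  set r : ℝ := min ε (min δ1 δ2) with hr
  have hrpos : 0 < r := lt_min hε (lt_min hδ1pos hδ2pos)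
  set ε' : ℝ := r / 2 with hε'
  have hε'pos : 0 < ε' := by positivity
  have hballM : Metric.closedBall θbar ε' ⊆ M := by
    intro z hz
    apply hδ2
    rw [Metric.mem_ball]
    calc dist z θbar ≤ ε' := Metric.mem_closedBall.mp hz
    _ < r := by rw [hε']; linarith
    _ ≤ δ2 := le_trans (min_le_right _ _) (min_le_right _ _)
  have hballδ1 : ∀ z ∈ Metric.closedBall θbar ε', dist z θbar < δ1 := by
    intro z hz
    calc dist z θbar ≤ ε' := Metric.mem_closedBall.mp hz
    _ < r := by rw [hε']; linarith
    _ ≤ δ1 := le_trans (min_le_right _ _) (min_le_left _ _)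
  have hn1 : ∀ᶠ n in atTop, ∀ z ∈ M,
      dist (fderiv ℝ Gl z) (fderiv ℝ (Gn n) z) < c/2 :=
    Metric.tendstoUniformlyOn_iff.mp hunif (c/2) (by positivity)
  have hcc : (f'symm.nnnorm : ℝ)⁻¹ - c = c := by
    have : (f'symm.nnnorm : ℝ) = ‖Ainv‖ := rfl
    rw [this, hc]; ring
  have hn2 : ∀ᶠ n in atTop, ‖Gn n θbar‖ < c * ε' := by
    have := Metric.tendsto_nhds.mp h0 (c * ε') (by positivity)
    filter_upwards [this] with n hn
    rwa [dist_zero_right] at hn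
  filter_upwards [hn1, hn2] with n hn1' hn2'
  -- the approximation property on the closed ball
  set cnn : ℝ≥0 := ⟨c, hcpos.le⟩ with hcnn
  have hbound : ∀ z ∈ Metric.closedBall θbar ε', ‖fderiv ℝ (Gn n) z - A‖ ≤ c := by
    intro z hz
    have hzM : z ∈ M := hballM hz
    have h1 : ‖fderiv ℝ (Gn n) z - fderiv ℝ Gl z‖ < c/2 := by
      have := hn1' z hzM
      rwa [dist_comm, dist_eq_norm] at this
    have h2 : ‖fderiv ℝ Gl z - A‖ < c/2 := by
      have := hδ1 (hballδ1 z hz)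
      rwa [dist_eq_norm] at this
    calc ‖fderiv ℝ (Gn n) z - A‖
        = ‖(fderiv ℝ (Gn n) z - fderiv ℝ Gl z) + (fderiv ℝ Gl z - A)‖ := by abel_nf
    _ ≤ ‖fderiv ℝ (Gn n) z - fderiv ℝ Gl z‖ + ‖fderiv ℝ Gl z - A‖ := norm_add_le _ _
    _ ≤ c := by linarith
  have happrox : ApproximatesLinearOn (Gn n) A (Metric.closedBall θbar ε') cnn := by
    intro x hx y hy
    have hder : ∀ z ∈ Metric.closedBall θbar ε',
        HasFDerivWithinAt (fun θ => Gn n θ - A θ) (fderiv ℝ (Gn n) z - A)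
          (Metric.closedBall θbar ε') z := by
      intro z hz
      have hzM : z ∈ M := hballM hz
      have hdiff : DifferentiableAt ℝ (Gn n) z :=
        ((hsm n).differentiableOn one_ne_zero).differentiableAt (hM.mem_nhds hzM)
      exact (hdiff.hasFDerivAt.sub A.hasFDerivAt).hasFDerivWithinAt
    have := Convex.norm_image_sub_le_of_norm_hasFDerivWithin_le hder hbound
      (convex_closedBall θbar ε') hy hx
    have heq : (Gn n x - A x) - (Gn n y - A y) = Gn n x - Gn n y - A (x - y) := by
      rw [map_sub]; abel
    rw [heq] at this
    exact this
  have hsurj := happrox.surjOn_closedBall_of_nonlinearRightInverse f'symm hε'pos.le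
    (subset_refl _)
  have h0mem : (0 : E) ∈ Metric.closedBall (Gn n θbar)
      (((f'symm.nnnorm : ℝ)⁻¹ - cnn) * ε') := by
    rw [Metric.mem_closedBall, dist_zero_left]
    have : ((cnn : ℝ≥0) : ℝ) = c := rfl
    rw [this, hcc]
    exact hn2'.le
  obtain ⟨θ, hθball, hθroot⟩ := hsurj h0mem
  refine ⟨θ, hballM hθball, ?_, hθroot⟩
  calc dist θ θbar ≤ ε' := Metric.mem_closedBall.mp hθball
  _ ≤ ε := by
    rw [hε']
    have : r ≤ ε := min_le_left _ _
    linarith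

end Thm22

namespace Thm22

lemma distδ_nonneg {p : ℕ} (x : Option (Eucl p)) (θ : Eucl p) : 0 ≤ distδ x θ := by
  cases x with
  | none => exact zero_le_one
  | some y => exact dist_nonneg

lemma measurable_fst' {α β : Type*} {m1 : MeasurableSpace α} {m2 : MeasurableSpace β} :
    Measurable[m1.prod m2] (Prod.fst : α × β → α) := by
  intro s hs
  exact (le_sup_left : m1.comap Prod.fst ≤ m1.prod m2) _ ⟨s, hs, rfl⟩

lemma measurableSet_none {α : Type*} [MeasurableSpace α] :
    MeasurableSet ({none} : Set (Option α)) := by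
  rw [measurableSet_option_iff]
  have h : (some ⁻¹' ({none} : Set (Option α))) = ∅ := by
    ext a; simp
  rw [h]; exact MeasurableSet.empty

/-- Patching lemma: a set which agrees with an `𝓕ₙ`-measurable set off a `P`-null set is
`𝓕ₙ`-measurable, provided `𝓕ₙ` contains all `P`-null sets. -/
lemma patch {Ω : Type*} [𝓕 : MeasurableSpace Ω] (P : Measure Ω)
    (mn : MeasurableSpace Ω) (hcomp : ∀ s : Set Ω, P s = 0 → MeasurableSet[mn] s)
    {S B Nn : Set Ω} (hB : MeasurableSet[mn] B) (hN : P Nn = 0)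
    (h1 : S \ B ⊆ Nn) (h2 : B \ S ⊆ Nn) : MeasurableSet[mn] S := by
  have hSB : MeasurableSet[mn] (S \ B) := hcomp _ (measure_mono_null h1 hN)
  have hBS : MeasurableSet[mn] (B \ S) := hcomp _ (measure_mono_null h2 hN)
  have hS : S = (B ∪ (S \ B)) \ (B \ S) := by
    ext x
    by_cases hxB : x ∈ B <;> by_cases hxS : x ∈ S <;>
      simp [hxB, hxS]
  rw [hS]
  exact (hB.union hSB).diff hBS

end Thm22

/-- **Theorem 2.2.**  Under Condition 2.1 with almost sure convergence instead of convergence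
in probability, there exists a strongly `θ̄`-consistent sequence of `Gₙ`-estimators. -/
theorem exists_strongly_consistent_estimator_sequence {Ω : Type*} [𝓕 : MeasurableSpace Ω]
    {p : ℕ} (P : Measure Ω) [IsProbabilityMeasure P] [P.IsComplete]
    (𝓕n : ℕ → MeasurableSpace Ω) (hle : ∀ n, 𝓕n n ≤ 𝓕)
    (hcomplete : ∀ n, ∀ s : Set Ω, P s = 0 → MeasurableSet[𝓕n n] s)
    (Θ : Set (Eucl p)) (hΘ : MeasurableSet Θ)
    (G : ℕ → Eucl p → Ω → Eucl p)
    (hG : ∀ n, Measurable[MeasurableSpace.prod (inferInstance : MeasurableSpace ↥Θ) (𝓕n n)]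
      (fun q : ↥Θ × Ω => G n q.1 q.2))
    (θbar : Eucl p) (M : Set (Eucl p)) (Glim : Eucl p → Ω → Eucl p)
    (hcond : Cond21AS P Θ G θbar M Glim) :
    ∃ est : ℕ → Ω → Option (Eucl p),
      (∀ n, IsEstimator (𝓕n n) Θ (G n) (est n)) ∧
      ∀ᵐ ω ∂P, Tendsto (fun n => distδ (est n ω) θbar) atTop (𝓝 0) := by

  classical
  open Thm22 in
  obtain ⟨hθint, hMopen, hθM, hMΘ, h1, h2, h3, h4, h5⟩ := hcond
  letI : StandardBorelSpace ↥Θ := hΘ.standardBorel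
  -- the radii
  set R : ℕ → ℝ := fun k => (1/2 : ℝ)^k with hR
  have hRpos : ∀ k, 0 < R k := fun k => by positivity
  have hRanti : ∀ j k, k ≤ j → R j ≤ R k := fun j k hkj =>
    pow_le_pow_of_le_one (by norm_num) (by norm_num) hkj
  -- the root sets
  set Zk : ℕ → ℕ → Set (↥Θ × Ω) := fun n k =>
    match k with
    | 0 => {q : ↥Θ × Ω | G n q.1 q.2 = 0}
    | (j+1) => {q : ↥Θ × Ω | G n q.1 q.2 = 0} ∩
        {q : ↥Θ × Ω | dist (q.1 : Eucl p) θbar ≤ R j} with hZk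
  have hZsub : ∀ n k, Zk n k ⊆ Zk n 0 := by
    intro n k
    match k with
    | 0 => exact subset_refl _
    | (j+1) => exact Set.inter_subset_left
  have hZmeas : ∀ n k,
      MeasurableSet[MeasurableSpace.prod (inferInstance : MeasurableSpace ↥Θ) (𝓕n n)]
        (Zk n k) := by
    intro n k
    have hroot : MeasurableSet[MeasurableSpace.prod
        (inferInstance : MeasurableSpace ↥Θ) (𝓕n n)] {q : ↥Θ × Ω | G n q.1 q.2 = 0} := by
      have : {q : ↥Θ × Ω | G n q.1 q.2 = 0} =
          (fun q : ↥Θ × Ω => G n q.1 q.2) ⁻¹' {0} := rfl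
      rw [this]
      exact hG n (measurableSet_singleton 0)
    match k with
    | 0 => exact hroot
    | (j+1) =>
      refine hroot.inter ?_
      have hd : Measurable (fun θs : ↥Θ => dist (θs : Eucl p) θbar) :=
        (continuous_subtype_val.dist continuous_const).measurable
      have : {q : ↥Θ × Ω | dist (q.1 : Eucl p) θbar ≤ R j} =
          Prod.fst ⁻¹' ((fun θs : ↥Θ => dist (θs : Eucl p) θbar) ⁻¹' (Set.Iic (R j))) := rfl
      rw [this]
      exact measurable_fst' (hd measurableSet_Iic)
  -- the selectors
  have htrim : ∀ n, IsFiniteMeasure (P.trim (hle n)) := by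
    intro n
    refine ⟨?_⟩
    rw [trim_measurableSet_eq (hle n) MeasurableSet.univ]
    exact measure_lt_top P _
  have hselex : ∀ n k, ∃ (t : Ω → Option ↥Θ) (N : Set Ω),
      MeasurableSet[𝓕n n] N ∧ (P.trim (hle n)) N = 0 ∧
      (∀ ω, (∃ θs, (θs, ω) ∈ Zk n k) → ∃ θs, t ω = some θs ∧ (θs, ω) ∈ Zk n k) ∧
      (∀ ω, ¬(∃ θs, (θs, ω) ∈ Zk n k) → t ω = none) ∧
      ∀ E : Set (Option ↥Θ), MeasurableSet E →
        ∃ B, MeasurableSet[𝓕n n] B ∧ t ⁻¹' E \ B ⊆ N ∧ B \ t ⁻¹' E ⊆ N := by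
    intro n k
    haveI := htrim n
    exact Thm22.combined_selector (P.trim (hle n)) (hZmeas n k)
  choose t Nt hNtmeas hNt0 htsel htnone htpre using hselex
  have hPN : ∀ n k, P (Nt n k) = 0 := by
    intro n k
    rw [← trim_measurableSet_eq (hle n) (hNtmeas n k)]
    exact hNt0 n k
  -- the estimator
  set K : ℕ → Ω → ℕ := fun n ω => @Nat.findGreatest (fun k => t n k ω ≠ none) (Classical.decPred _) n with hK
  set est : ℕ → Ω → Option (Eucl p) :=
    fun n ω => Option.map (Subtype.val) (t n (K n ω) ω) with hest
  -- key: if some selector at level K is nonempty, we get the chosen root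
  have hKroot : ∀ n ω, t n (K n ω) ω ≠ none →
      ∃ θs : ↥Θ, est n ω = some (θs : Eucl p) ∧ (θs, ω) ∈ Zk n (K n ω) := by
    intro n ω hne
    have hex : ∃ θs, (θs, ω) ∈ Zk n (K n ω) := by
      by_contra hcon
      exact hne (htnone n (K n ω) ω hcon)
    obtain ⟨θs, heq, hmem⟩ := htsel n (K n ω) ω hex
    exact ⟨θs, by rw [hest]; simp only [heq, Option.map_some], hmem⟩
  refine ⟨est, ?_, ?_⟩
  · -- each estₙ is a Gₙ-estimator
    intro n
    constructor
    · -- measurability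
      intro E hE
      have hSk : ∀ k, MeasurableSet[𝓕n n] {ω | t n k ω ≠ none} := by
        intro k
        have hset : {ω | t n k ω ≠ none} = (t n k) ⁻¹' ({none}ᶜ) := rfl
        obtain ⟨B, hB, hd1, hd2⟩ := htpre n k ({none}ᶜ) measurableSet_none.compl
        rw [hset]
        exact patch P (𝓕n n) (hcomplete n) hB (hPN n k) hd1 hd2
      have hKmeas : ∀ j, MeasurableSet[𝓕n n] {ω | K n ω = j} := by
        intro j
        by_cases hj : j ≤ n
        · have hdec : {ω | K n ω = j} =
              {ω | j ≠ 0 → t n j ω ≠ none} ∩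
              ⋂ (k) (_ : j < k ∧ k ≤ n), {ω | t n k ω ≠ none}ᶜ := by
            ext ω
            rw [Set.mem_setOf_eq, hK]
            simp only [Nat.findGreatest_eq_iff, Set.mem_inter_iff, Set.mem_setOf_eq,
              Set.mem_iInter, Set.mem_compl_iff]
            constructor
            · rintro ⟨-, hne, hmax⟩
              exact ⟨hne, fun k ⟨hk1, hk2⟩ => hmax hk1 hk2⟩
            · rintro ⟨hne, hmax⟩
              exact ⟨hj, hne, fun k hk1 hk2 => hmax k ⟨hk1, hk2⟩⟩
          rw [hdec]
          refine MeasurableSet.inter ?_ ?_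
          · by_cases hj0 : j = 0
            · have : {ω | j ≠ 0 → t n j ω ≠ none} = Set.univ := by
                ext ω; simp [hj0]
              rw [this]; exact @MeasurableSet.univ Ω (𝓕n n)
            · have : {ω | j ≠ 0 → t n j ω ≠ none} = {ω | t n j ω ≠ none} := by
                ext ω; simp [hj0]
              rw [this]; exact hSk j
          · exact MeasurableSet.iInter (fun k => MeasurableSet.iInter
              (fun _ => (hSk k).compl))
        · have : {ω | K n ω = j} = ∅ := by
            ext ω
            simp only [Set.mem_setOf_eq, Set.mem_empty_iff_false, iff_false]
            intro hKj
            exact hj (hKj ▸ @Nat.findGreatest_le (fun k => t n k ω ≠ none) (Classical.decPred _) n)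
          rw [this]; exact @MeasurableSet.empty Ω (𝓕n n)
      have hEθ : MeasurableSet ((Option.map (Subtype.val : ↥Θ → Eucl p)) ⁻¹' E) := by
        rw [measurableSet_option_iff]
        have : some ⁻¹' ((Option.map (Subtype.val : ↥Θ → Eucl p)) ⁻¹' E) =
            (Subtype.val : ↥Θ → Eucl p) ⁻¹' (some ⁻¹' E) := by
          ext θs; simp
        rw [this]
        exact measurable_subtype_coe (measurableSet_some_preimage hE)
      have hdecomp : est n ⁻¹' E = ⋃ (j : ℕ) (_ : j ≤ n),
          ({ω | K n ω = j} ∩ (t n j) ⁻¹' ((Option.map Subtype.val) ⁻¹' E)) := by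
        ext ω
        simp only [Set.mem_preimage, Set.mem_iUnion, Set.mem_inter_iff, Set.mem_setOf_eq]
        constructor
        · intro hmem
          exact ⟨K n ω, @Nat.findGreatest_le (fun k => t n k ω ≠ none) (Classical.decPred _) n,
            rfl, hmem⟩
        · rintro ⟨j, -, rfl, hmem⟩
          exact hmem
      rw [hdecomp]
      refine MeasurableSet.iUnion (fun j => MeasurableSet.iUnion (fun _ => ?_))
      refine (hKmeas j).inter ?_
      obtain ⟨B, hB, hd1, hd2⟩ := htpre n j _ hEθ
      exact patch P (𝓕n n) (hcomplete n) hB (hPN n j) hd1 hd2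
    · -- estimating equation
      intro ω
      have hDset : ω ∈ Dset Θ (G n) ↔ ∃ θs : ↥Θ, (θs, ω) ∈ Zk n 0 := by
        constructor
        · rintro ⟨θ, hθΘ, hroot⟩
          exact ⟨⟨θ, hθΘ⟩, hroot⟩
        · rintro ⟨θs, hroot⟩
          exact ⟨θs, θs.2, hroot⟩
      constructor
      · intro hω
        have h0' := hDset.mp hω
        have hpred0 : t n 0 ω ≠ none := by
          obtain ⟨θs, heq, -⟩ := htsel n 0 ω h0'
          rw [heq]; exact Option.some_ne_none _
        have hpredK : t n (K n ω) ω ≠ none :=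
          @Nat.findGreatest_spec 0 (fun k => t n k ω ≠ none) (Classical.decPred _) n
            (Nat.zero_le n) hpred0
        obtain ⟨θs, heq, hmem⟩ := hKroot n ω hpredK
        exact ⟨θs, heq, θs.2, hZsub n (K n ω) hmem⟩
      · intro hω
        have hall : ∀ k, t n k ω = none := by
          intro k
          apply htnone
          rintro ⟨θs, hmem⟩
          exact hω (hDset.mpr ⟨θs, hZsub n k hmem⟩)
        rw [hest]
        simp only [hall (K n ω), Option.map_none]
  · -- almost sure convergence
    filter_upwards [h1, h2, h3, h4, h5] with ω h1ω h2ω h3ω h4ω h5ω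
    have hroots := Thm22.roots_near (Gn := fun n θ => G n θ ω) (Gl := fun θ => Glim θ ω)
      hMopen hθM h1ω h2ω h3ω.1 h3ω.2 h4ω h5ω
    rw [Metric.tendsto_nhds]
    intro ε hε
    obtain ⟨k, hk⟩ := exists_pow_lt_of_lt_one hε (by norm_num : (1/2 : ℝ) < 1)
    have hRk : R k < ε := hk
    have hev := hroots (R k) (hRpos k)
    filter_upwards [hev, eventually_ge_atTop (k + 1)] with n hn hnk
    obtain ⟨θ, hθMem, hθdist, hθroot⟩ := hn
    set θs : ↥Θ := ⟨θ, hMΘ hθMem⟩ with hθs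
    have hmem : (θs, ω) ∈ Zk n (k + 1) := ⟨hθroot, hθdist⟩
    have hpred : t n (k+1) ω ≠ none := by
      obtain ⟨θs', heq, -⟩ := htsel n (k+1) ω ⟨θs, hmem⟩
      rw [heq]; exact Option.some_ne_none _
    have hKge : k + 1 ≤ K n ω :=
      @Nat.le_findGreatest (k+1) (fun k => t n k ω ≠ none) (Classical.decPred _) n hnk hpred
    have hpredK : t n (K n ω) ω ≠ none :=
      @Nat.findGreatest_spec (k+1) (fun k => t n k ω ≠ none) (Classical.decPred _) n
        hnk hpred
    obtain ⟨θs', heq, hmemK⟩ := hKroot n ω hpredK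
    obtain ⟨K', hK'⟩ := Nat.exists_eq_add_of_le hKge
    have hdistK : dist (θs' : Eucl p) θbar ≤ R (k + K') := by
      have : (θs', ω) ∈ Zk n (k + 1 + K') := hK' ▸ hmemK
      have h2' : (θs', ω) ∈ Zk n ((k + K') + 1) := by
        have harith : k + 1 + K' = (k + K') + 1 := by ring
        rw [← harith]
        exact this
      exact h2'.2
    have hfinal : distδ (est n ω) θbar ≤ R k := by
      rw [heq]
      show dist (θs' : Eucl p) θbar ≤ R k
      exact le_trans hdistK (hRanti (k + K') k (Nat.le_add_right k K'))
    rw [Real.dist_eq, sub_zero, abs_of_nonneg (Thm22.distδ_nonneg _ _)]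
    exact lt_of_le_of_lt hfinal hRk
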